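/- arXiv:2302.01224 — 5 statements merged into one kernel-verified Lean document; each statement's English description precedes it below -/
import Mathlib

section
/- Failure of the deduction theorem: the judgement ⊢ (η ∧ ((η ⊗ ρ) ⊸ θ)) ⊸ (ρ ⊸ θ) is not a tautology over the Lawvere quantale; specifically, with m(η) = 1/4, m(ρ) = 0, m(θ) = 1, the interpretation of the formula is nonzero. -/
open ENNReal

theorem ENNReal.max_self_one_sub_lt_one {a : ℝ≥0∞} (ha₀ : a ≠ 0) (ha₁ : a < 1) :
    max a (1 - a) < 1 :=
  max_lt ha₁ (ENNReal.sub_lt_self one_ne_top one_ne_zero ha₀)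

/-- Failure of the deduction theorem: with `m(η) = 1/4`, `m(ρ) = 0`,
`m(θ) = 1`, the formula `(η ∧ ((η ⊗ ρ) ⊸ θ)) ⊸ (ρ ⊸ θ)` evaluates to a
nonzero value, so the judgement `⊢ (η ∧ ((η ⊗ ρ) ⊸ θ)) ⊸ (ρ ⊸ θ)` is not
a tautology. -/
theorem deduction_theorem_fails :
    ((1 : ℝ≥0∞) - (0 : ℝ≥0∞)) - max (1/4 : ℝ≥0∞) ((1 : ℝ≥0∞) - ((1/4 : ℝ≥0∞) + 0)) ≠ 0 := by
  rw [tsub_zero, add_zero, ← pos_iff_ne_zero, tsub_pos_iff_lt]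
  exact ENNReal.max_self_one_sub_lt_one (by norm_num) (ENNReal.div_lt_of_lt_mul (by norm_num))
end

section
/- Failure of the weak deduction theorem: for every n ∈ ℕ and every model m : Prop → [0,∞], the formula n·(𝟙 ∨ ¬𝟙) ⊸ ⊥ evaluates to ∞ ∸ n·min(1, ∞ ∸ 1) = ∞ ≠ 0; hence no judgement ⊢ n(𝟙 ∨ ¬𝟙) ⊸ ⊥ is a tautology. -/
open ENNReal

theorem ENNReal.natCast_mul_min_one_ne_top (n : ℕ) (x : ℝ≥0∞) : (n : ℝ≥0∞) * min 1 x ≠ ⊤ :=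
  mul_ne_top (natCast_ne_top n) (ne_top_of_le_ne_top one_ne_top (min_le_left 1 x))

/-- Failure of the weak deduction theorem: for every `n : ℕ`, the formula
`n(𝟙 ∨ ¬𝟙) ⊸ ⊥` evaluates to `∞ ∸ n·min(1, ∞ ∸ 1) = ∞ ≠ 0` in every model. -/
theorem weak_deduction_theorem_fails (n : ℕ) :
    (⊤ : ℝ≥0∞) - (n : ℝ≥0∞) * min (1 : ℝ≥0∞) ((⊤ : ℝ≥0∞) - 1) = ⊤ ∧
    (⊤ : ℝ≥0∞) - (n : ℝ≥0∞) * min (1 : ℝ≥0∞) ((⊤ : ℝ≥0∞) - 1) ≠ 0 := by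
  have h : (⊤ : ℝ≥0∞) - (n : ℝ≥0∞) * min 1 (⊤ - 1) = ⊤ :=
    top_sub (natCast_mul_min_one_ne_top n _)
  exact ⟨h, h ▸ top_ne_zero⟩
end

section
/- Incompleteness witness: for every natural number k there is a model m over two propositional atoms p, q satisfying all judgements (n+1)p ⊢ n·q for 0 ≤ n ≤ k but not satisfying p ⊢ q; namely m(p) = k/(k+1), m(q) = 1 works: (n+1)·(k/(k+1)) ≥ n·1 for all n ≤ k, yet k/(k+1) < 1. -/
section

variable {α : Type*} [Field α] [LinearOrder α] [IsStrictOrderedRing α]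

theorem Nat.cast_div_cast_add_one_lt_one (k : ℕ) : (k : α) / (k + 1) < 1 :=
  (div_lt_one (Nat.cast_add_one_pos k)).2 (lt_add_one _)

theorem Nat.cast_le_cast_add_one_mul_div {n k : ℕ} (hnk : n ≤ k) :
    (n : α) ≤ (n + 1) * ((k : α) / (k + 1)) := by
  have hnk' : (n : α) ≤ k := Nat.cast_le.2 hnk
  rw [← mul_div_assoc, le_div_iff₀ (Nat.cast_add_one_pos k)]
  -- `(n + 1) * k - n * (k + 1) = k - n`
  linarith

end

/-- Incompleteness witness: for every `k`, the model `m(p) = k/(k+1)`,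
`m(q) = 1` satisfies `(n+1)p ⊢ n·q` for all `n ≤ k` but not `p ⊢ q`. -/
theorem incompleteness_witness (k : ℕ) :
    (∀ n : ℕ, n ≤ k → ((n : ℝ) + 1) * ((k : ℝ) / ((k : ℝ) + 1)) ≥ (n : ℝ)) ∧
    (k : ℝ) / ((k : ℝ) + 1) < 1 :=
  ⟨fun _ hn => Nat.cast_le_cast_add_one_mul_div hn, Nat.cast_div_cast_add_one_lt_one k⟩
end

section
/- If every model m : Prop → [0,∞] satisfies all judgements (n+1)p ⊢ n·q for n ∈ ℕ, then m(p) ≥ m(q); i.e., for a, b ∈ [0,∞], if (n+1)·a ≥ n·b for all n ∈ ℕ, then a ≥ b. -/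
open ENNReal

theorem ENNReal.eq_zero_of_forall_natCast_mul_le {x c : ℝ≥0∞} (hc : c ≠ ⊤)
    (h : ∀ n : ℕ, (n : ℝ≥0∞) * x ≤ c) : x = 0 := by
  by_contra hx
  obtain ⟨n, hn⟩ := ENNReal.exists_nat_mul_gt hx hc
  exact (h n).not_gt hn

/-- Semantic entailment behind the incompleteness example: if
`(n+1)·a ≥ n·b` for all `n : ℕ`, then `a ≥ b` in `[0,∞]`. -/
theorem infinite_axioms_entail (a b : ℝ≥0∞)
    (h : ∀ n : ℕ, (n : ℝ≥0∞) * b ≤ ((n : ℝ≥0∞) + 1) * a) : b ≤ a := by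
  rcases eq_or_ne a ⊤ with rfl | ha
  · exact le_top
  refine tsub_eq_zero_iff_le.mp (ENNReal.eq_zero_of_forall_natCast_mul_le ha fun n => ?_)
  -- `n * b ≤ n * a + a` rearranges to `n * (b - a) ≤ a`, whose right side is finite
  rw [ENNReal.mul_sub fun _ _ => natCast_ne_top n, tsub_le_iff_left]
  simpa [add_mul, add_comm] using h n
end

section
/- Affine completeness via Motzkin/Farkas (homogeneous linear case): let A be an l × k real matrix and c ∈ ℝᵏ. If for every x ∈ ℝᵏ with x ≥ 0 and A x ≥ 0 one has cᵀ x ≥ 0, then there exist t ∈ ℝˡ with t ≥ 0 and d ∈ ℝᵏ with d ≥ 0 such that c = Aᵀ t + d. -/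
open Matrix

section Caratheodory

variable {E : Type*} [AddCommGroup E] [Module ℝ E]

lemma cone_caratheodory {ι : Type*} [Fintype ι] [DecidableEq ι] (v : ι → E) :
    ∀ (n : ℕ) (s : ι → ℝ), 0 ≤ s → (Finset.univ.filter fun i => s i ≠ 0).card ≤ n →
      ∃ S : Finset ι, LinearIndependent ℝ (fun i : S => v i) ∧
        ∃ s' : ι → ℝ, 0 ≤ s' ∧ (∀ i ∉ S, s' i = 0) ∧ ∑ i, s' i • v i = ∑ i, s i • v i := by
  intro n
  induction n with
  | zero =>
    intro s hs hcard
    have hzero : ∀ i, s i = 0 := by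
      intro i
      by_contra hi
      have hmem : i ∈ Finset.univ.filter fun i => s i ≠ 0 := by simp [hi]
      have := Finset.card_pos.mpr ⟨i, hmem⟩
      omega
    haveI : IsEmpty ((∅ : Finset ι) : Type _) := Finset.isEmpty_coe_sort.mpr rfl
    exact ⟨∅, linearIndependent_empty_type, s, hs, fun i _ => hzero i, rfl⟩
  | succ n ih =>
    intro s hs hcard
    set T := Finset.univ.filter fun i => s i ≠ 0 with hT
    by_cases hLI : LinearIndependent ℝ (fun i : T => v i)
    · refine ⟨T, hLI, s, hs, fun i hi => ?_, rfl⟩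
      by_contra h0
      exact hi (by simp [hT, h0])
    · obtain ⟨g, hg0, i₁, hgi₁⟩ := Fintype.not_linearIndependent_iff.mp hLI
      classical
      set ε : ℝ := if 0 < g i₁ then 1 else -1 with hε
      set c : ι → ℝ := fun i => if h : i ∈ T then ε * g ⟨i, h⟩ else 0 with hcdef
      have hcT : ∀ i ∉ T, c i = 0 := fun i hi => by simp [hcdef, hi]
      have hcv : ∑ i, c i • v i = 0 := by
        have h1 : ∑ i, c i • v i = ∑ i ∈ T, c i • v i :=
          (Finset.sum_subset (Finset.subset_univ T)
            (fun i _ hi => by rw [hcT i hi, zero_smul])).symm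
        have h2 : ∑ i ∈ T, c i • v i = ε • ∑ i : T, g i • v (i : ι) := by
          rw [← Finset.sum_coe_sort T, Finset.smul_sum]
          refine Finset.sum_congr rfl fun i _ => ?_
          simp [hcdef, i.2, mul_smul]
        rw [h1, h2, hg0, smul_zero]
      have h0c : 0 < c i₁ := by
        have : (i₁ : ι) ∈ T := i₁.2
        rcases lt_or_gt_of_ne hgi₁ with hneg | hpos
        · have : ¬ (0 < g i₁) := by linarith
          simp only [hcdef, dif_pos i₁.2, hε, if_neg this, Subtype.coe_eta]
          nlinarith
        · simp only [hcdef, dif_pos i₁.2, hε, if_pos hpos, Subtype.coe_eta]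
          nlinarith
      set P := T.filter fun i => 0 < c i with hP
      have hPne : P.Nonempty := ⟨i₁, Finset.mem_filter.mpr ⟨i₁.2, h0c⟩⟩
      obtain ⟨i₀, hi₀P, hmin⟩ := P.exists_min_image (fun i => s i / c i) hPne
      have hci₀ : 0 < c i₀ := (Finset.mem_filter.mp hi₀P).2
      set r : ℝ := s i₀ / c i₀ with hr
      have hr0 : 0 ≤ r := div_nonneg (hs i₀) hci₀.le
      set s' : ι → ℝ := fun i => s i - r * c i with hs'def
      have hciT : ∀ i, c i ≠ 0 → i ∈ T := by
        intro i hci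
        by_contra hiT
        exact hci (hcT i hiT)
      have hs' : 0 ≤ s' := by
        intro i
        by_cases hci : 0 < c i
        · have hiP : i ∈ P := Finset.mem_filter.mpr ⟨hciT i hci.ne', hci⟩
          have := hmin i hiP
          have : r * c i ≤ s i := (le_div_iff₀ hci).mp this
          simp only [hs'def, Pi.zero_apply]
          linarith
        · have : r * c i ≤ 0 := mul_nonpos_of_nonneg_of_nonpos hr0 (not_lt.mp hci)
          have := hs i
          simp only [hs'def, Pi.zero_apply] at *
          linarith
      have hsum : ∑ i, s' i • v i = ∑ i, s i • v i := by
        simp only [hs'def, sub_smul, Finset.sum_sub_distrib, mul_smul]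
        rw [← Finset.smul_sum, hcv, smul_zero, sub_zero]
      have hs'i₀ : s' i₀ = 0 := by
        simp only [hs'def, hr]
        field_simp
        ring
      have hsub : (Finset.univ.filter fun i => s' i ≠ 0) ⊆ T.erase i₀ := by
        intro i hi
        simp only [Finset.mem_filter, Finset.mem_univ, true_and] at hi
        refine Finset.mem_erase.mpr ⟨?_, ?_⟩
        · rintro rfl; exact hi hs'i₀
        · by_contra hiT
          exact hi (by simp [hs'def, (by simpa [hT] using hiT : s i = 0), hcT i hiT])
      have hi₀T : i₀ ∈ T := (Finset.mem_filter.mp hi₀P).1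
      have hcard' : (Finset.univ.filter fun i => s' i ≠ 0).card ≤ n := by
        have h1 := Finset.card_le_card hsub
        have h2 := Finset.card_erase_of_mem hi₀T
        have h3 := Finset.card_pos.mpr ⟨i₀, hi₀T⟩
        omega
      obtain ⟨S, hS, s'', h1, h2, h3⟩ := ih s' hs' hcard'
      exact ⟨S, hS, s'', h1, h2, h3.trans hsum⟩

end Caratheodory

section Closed

variable {F : Type*} [NormedAddCommGroup F] [InnerProductSpace ℝ F] [FiniteDimensional ℝ F]

lemma isClosed_finitely_generated_cone {ι : Type*} [Fintype ι] [DecidableEq ι] (v : ι → F) :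
    IsClosed {x : F | ∃ s : ι → ℝ, 0 ≤ s ∧ x = ∑ i, s i • v i} := by
  classical
  have key : {x : F | ∃ s : ι → ℝ, 0 ≤ s ∧ x = ∑ i, s i • v i} =
      ⋃ S ∈ {S : Finset ι | LinearIndependent ℝ (fun i : S => v i)},
        (fun s : S → ℝ => ∑ i : S, s i • v (i : ι)) '' {s | 0 ≤ s} := by
    ext x
    simp only [Set.mem_setOf_eq, Set.mem_iUnion, Set.mem_image, exists_prop]
    constructor
    · rintro ⟨s, hs, rfl⟩
      obtain ⟨S, hS, s', hs', hsupp, hsum⟩ :=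
        cone_caratheodory v (Finset.univ.filter fun i => s i ≠ 0).card s hs le_rfl
      refine ⟨S, hS, fun i => s' i, fun i => hs' i, ?_⟩
      rw [← hsum, Finset.sum_coe_sort S (fun i => s' i • v i)]
      exact Finset.sum_subset (Finset.subset_univ S)
        (fun i _ hi => by rw [hsupp i hi, zero_smul] : ∀ i ∈ Finset.univ, i ∉ S → s' i • v i = 0)
    · rintro ⟨S, hS, s, hsnn, rfl⟩
      refine ⟨fun i => if h : i ∈ S then s ⟨i, h⟩ else 0, fun i => ?_, ?_⟩
      · dsimp only [Pi.zero_apply]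
        split
        · exact hsnn _
        · exact le_rfl
      · have e1 : ∑ i : S, s i • v (i : ι) =
            ∑ i : S, (if h : (i : ι) ∈ S then s ⟨i, h⟩ else 0) • v (i : ι) :=
          Finset.sum_congr rfl fun i _ => by rw [dif_pos i.2]
        rw [e1, Finset.sum_coe_sort S (fun i => (if h : i ∈ S then s ⟨i, h⟩ else 0) • v i)]
        exact Finset.sum_subset (Finset.subset_univ S)
          (fun i _ hi => by rw [dif_neg hi, zero_smul] :
            ∀ i ∈ Finset.univ, i ∉ S → (if h : i ∈ S then s ⟨i, h⟩ else 0) • v i = 0)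
  rw [key]
  refine Set.Finite.isClosed_biUnion (Set.toFinite _) ?_
  intro S hS
  set f : (S → ℝ) →ₗ[ℝ] F := Fintype.linearCombination ℝ (fun i : S => v i) with hf
  have hker : LinearMap.ker f = ⊥ := by
    rw [LinearMap.ker_eq_bot']
    intro s hsf
    funext i
    exact Fintype.linearIndependent_iff.mp hS s
      (by simpa [hf, Fintype.linearCombination_apply] using hsf) i
  have hce := LinearMap.isClosedEmbedding_of_injective hker
  have hcl : IsClosed {s : S → ℝ | 0 ≤ s} := by
    have heq : {s : S → ℝ | 0 ≤ s} = ⋂ i, {s : S → ℝ | 0 ≤ s i} := by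
      ext s; simp [Pi.le_def]
    rw [heq]
    exact isClosed_iInter fun i => isClosed_le continuous_const (continuous_apply i)
  have himg := hce.isClosedMap _ hcl
  have : (fun s : S → ℝ => ∑ i : S, s i • v (i : ι)) = ⇑f := by
    funext s
    simp [hf, Fintype.linearCombination_apply]
  rw [this]
  exact himg

end Closed

open scoped InnerProductSpace

lemma euclidean_sum_apply {ι κ : Type*} [Fintype ι] [Fintype κ]
    (f : ι → EuclideanSpace ℝ κ) (j : κ) :
    (∑ i, f i) j = ∑ i, f i j :=
  map_sum (PiLp.projₗ (𝕜 := ℝ) (β := fun _ : κ => ℝ) 2 j) f Finset.univ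
/-- Farkas/Motzkin-type lemma (homogeneous linear case): if every `x ≥ 0`
with `A x ≥ 0` satisfies `cᵀ x ≥ 0`, then `c = Aᵀ t + d` for some `t ≥ 0`
and `d ≥ 0`. -/
theorem farkas_affine_completeness {l k : ℕ}
    (A : Matrix (Fin l) (Fin k) ℝ) (c : Fin k → ℝ)
    (h : ∀ x : Fin k → ℝ, 0 ≤ x → 0 ≤ A.mulVec x → 0 ≤ dotProduct c x) :
    ∃ (t : Fin l → ℝ) (d : Fin k → ℝ),
      0 ≤ t ∧ 0 ≤ d ∧ c = A.transpose.mulVec t + d := by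
  classical
  set v : Fin l ⊕ Fin k → EuclideanSpace ℝ (Fin k) :=
    Sum.elim (fun i => (WithLp.equiv 2 (Fin k → ℝ)).symm (A i))
      (fun j => EuclideanSpace.single j 1) with hv
  set C : Set (EuclideanSpace ℝ (Fin k)) :=
    {x | ∃ s : Fin l ⊕ Fin k → ℝ, 0 ≤ s ∧ x = ∑ i, s i • v i} with hC
  set c' : EuclideanSpace ℝ (Fin k) := (WithLp.equiv 2 (Fin k → ℝ)).symm c with hc'
  have hvmem : ∀ i₀, v i₀ ∈ C := by
    intro i₀
    refine ⟨fun i => if i = i₀ then 1 else 0, fun i => by dsimp; split <;> norm_num, ?_⟩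
    simp [ite_smul, Finset.sum_ite_eq']
  by_cases hc : c' ∈ C
  · obtain ⟨s, hs, hsum⟩ := hc
    refine ⟨fun i => s (.inl i), fun j => s (.inr j), fun i => hs _, fun j => hs _, ?_⟩
    funext j
    have hj := congrFun (congrArg (WithLp.equiv 2 (Fin k → ℝ)) hsum) j
    rw [show ((WithLp.equiv 2 (Fin k → ℝ)) (∑ i, s i • v i)) j = (∑ i, s i • v i) j from rfl,
      euclidean_sum_apply] at hj
    simp only [hc', WithLp.equiv_symm_apply, PiLp.toLp_apply, PiLp.smul_apply, smul_eq_mul,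
      Fintype.sum_sum_type, hv, Sum.elim_inl, Sum.elim_inr, EuclideanSpace.single_apply,
      WithLp.equiv_apply, WithLp.ofLp_toLp, mul_ite, mul_one, mul_zero, Finset.sum_ite_eq,
      Finset.mem_univ, if_true] at hj
    rw [Pi.add_apply, hj]
    congr 1
    simp only [Matrix.mulVec, dotProduct, Matrix.transpose_apply]
    exact Finset.sum_congr rfl fun i _ => mul_comm _ _
  · let K : ConvexCone ℝ (EuclideanSpace ℝ (Fin k)) :=
      { carrier := C
        smul_mem' := by
          rintro a ha x ⟨s, hs, rfl⟩
          refine ⟨a • s, fun i => mul_nonneg ha.le (hs i), ?_⟩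
          rw [Finset.smul_sum]
          exact Finset.sum_congr rfl fun i _ => by
            rw [Pi.smul_apply, smul_eq_mul, smul_smul]
        add_mem' := by
          rintro x ⟨s, hs, rfl⟩ y ⟨s', hs', rfl⟩
          refine ⟨s + s', fun i => add_nonneg (hs i) (hs' i), ?_⟩
          rw [← Finset.sum_add_distrib]
          exact Finset.sum_congr rfl fun i _ => by
            rw [Pi.add_apply, add_smul] }
    have hne : (K : Set (EuclideanSpace ℝ (Fin k))).Nonempty :=
      ⟨0, ⟨0, le_rfl, by simp⟩⟩
    have hcl : IsClosed (K : Set (EuclideanSpace ℝ (Fin k))) :=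
      isClosed_finitely_generated_cone v
    obtain ⟨y, hy1, hy2⟩ :=
      ProperCone.hyperplane_separation' (E := EuclideanSpace ℝ (Fin k))
        ({ carrier := C
           add_mem' := fun hx hy => K.add_mem' hx hy
           zero_mem' := ⟨0, le_rfl, by simp⟩
           smul_mem' := by
             rintro a x ⟨s, hs, rfl⟩
             refine ⟨(a : ℝ) • s, fun i => mul_nonneg a.2 (hs i), ?_⟩
             rw [show a • ∑ i, s i • v i = (a : ℝ) • ∑ i, s i • v i from rfl, Finset.smul_sum]
             exact Finset.sum_congr rfl fun i _ => by
               rw [Pi.smul_apply, smul_eq_mul, smul_smul]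
           isClosed' := hcl } : ProperCone ℝ (EuclideanSpace ℝ (Fin k))) hc
    set yv : Fin k → ℝ := fun j => y j with hyv
    have hynn : 0 ≤ yv := by
      intro j
      have := hy1 _ (hvmem (.inr j))
      simpa [PiLp.inner_apply, RCLike.inner_apply, hv, EuclideanSpace.single_apply,
        Finset.sum_ite_eq, hyv] using this
    have hAy : 0 ≤ A.mulVec yv := by
      intro i
      have := hy1 _ (hvmem (.inl i))
      simp only [PiLp.inner_apply, RCLike.inner_apply, hv, Sum.elim_inl, conj_trivial,
        WithLp.equiv_symm_apply, PiLp.toLp_apply] at this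
      simpa [Matrix.mulVec, dotProduct, hyv, mul_comm] using this
    have hcy := h yv hynn hAy
    have hyc : ⟪y, c'⟫_ℝ = dotProduct c yv := by
      simp only [PiLp.inner_apply, RCLike.inner_apply, conj_trivial, hc',
        WithLp.equiv_symm_apply, PiLp.toLp_apply, dotProduct, hyv]
    rw [real_inner_comm, hyc] at hy2
    linarith
end
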